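/- arXiv:0808.1016 — 2 statements merged into one kernel-verified Lean document; each statement's English description precedes it below -/
import Mathlib

section
/- (Lemma 1) Let S = sign(Med_c) ∈ {-1, 0, 1}. If O < |1 - 2·F_c(0)|, then the unique median of the mixture CDF F is the unique real β* with F_c(β*) = (1 - S·O)/2; if O ≥ |1 - 2·F_c(0)|, then 0 is a median of the mixture CDF F. -/
open Filter Topology Function

/-- The mixture CDF `F(β) = π·1_{β ≥ 0} + (1-π)·F_c(β)`. -/
noncomputable def mixCDF (p : ℝ) (Fc : ℝ → ℝ) (β : ℝ) : ℝ :=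
  (if 0 ≤ β then p else 0) + (1 - p) * Fc β

/-- `M` is a median of `F`: `F(M) ≥ 1/2` and the left limit `F(M⁻) ≤ 1/2`. -/
def IsMedian (F : ℝ → ℝ) (M : ℝ) : Prop :=
  1 / 2 ≤ F M ∧ Function.leftLim F M ≤ 1 / 2

/-!
`F` is strictly increasing and continuous except for a jump of size `π` at `0`, from
`(1-π)·F_c(0)` to `π + (1-π)·F_c(0)`. Since `(1-π)·O = π`, this jump contains `1/2` exactly when
`O ≥ |1 - 2·F_c(0)|`, and then `0` is a median. Otherwise `F` takes the value `1/2` at a point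
`β*` on the same side of `0` as `Med_c`; there the indicator is `(1 + S)/2`, so `F(β*) = 1/2`
reads `F_c(β*) = (1 - S·O)/2`, and strict monotonicity makes `β*` the only median.
-/

theorem IsMedian.of_eq_half {F : ℝ → ℝ} (hF : Monotone F) {x : ℝ} (hx : F x = 1 / 2) :
    IsMedian F x :=
  ⟨hx.ge, (hF.leftLim_le le_rfl).trans hx.le⟩

theorem IsMedian.eq_of_strictMono {F : ℝ → ℝ} (hF : StrictMono F) {x M : ℝ}
    (hx : F x = 1 / 2) (hM : IsMedian F M) : M = x := by
  rcases lt_trichotomy M x with hlt | heq | hgt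
  · linarith [hM.1, hF hlt]
  · exact heq
  · have hmid : F ((M + x) / 2) ≤ leftLim F M := hF.monotone.le_leftLim (by linarith)
    linarith [hM.2, hF (show x < (M + x) / 2 by linarith)]

theorem Real.sign_eq_sign_one_sub_two_mul {Fc : ℝ → ℝ} (hFc : StrictMono Fc) {medc : ℝ}
    (hmedc : Fc medc = 1 / 2) : Real.sign medc = Real.sign (1 - 2 * Fc 0) := by
  rcases lt_trichotomy medc 0 with h | rfl | h
  · have := hFc h
    rw [Real.sign_of_neg h, Real.sign_of_neg (by linarith)]
  · rw [hmedc]; norm_num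
  · have := hFc h
    rw [Real.sign_of_pos h, Real.sign_of_pos (by linarith)]

section MixCDF

variable {p : ℝ} {Fc : ℝ → ℝ}

theorem mixCDF_strictMono (hp0 : 0 ≤ p) (hp1 : p < 1) (hFc : StrictMono Fc) :
    StrictMono (mixCDF p Fc) := by
  intro x y hxy
  have hind : (if (0 : ℝ) ≤ x then p else 0) ≤ (if (0 : ℝ) ≤ y then p else 0) := by
    split_ifs with hx hy
    · exact le_rfl
    · exact absurd (hx.trans hxy.le) hy
    · exact hp0
    · exact le_rfl
  have hFxy : (1 - p) * Fc x < (1 - p) * Fc y :=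
    mul_lt_mul_of_pos_left (hFc hxy) (by linarith)
  exact add_lt_add_of_le_of_lt hind hFxy

theorem leftLim_mixCDF_zero (hFc : Continuous Fc) :
    leftLim (mixCDF p Fc) 0 = (1 - p) * Fc 0 := by
  have heq : ∀ᶠ x in 𝓝[<] (0 : ℝ), (1 - p) * Fc x = mixCDF p Fc x :=
    eventually_of_mem self_mem_nhdsWithin fun x (hx : x < 0) => by
      simp [mixCDF, not_le.mpr hx]
  have hT : Tendsto (fun x => (1 - p) * Fc x) (𝓝[<] (0 : ℝ)) (𝓝 ((1 - p) * Fc 0)) :=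
    ((hFc.tendsto 0).const_mul _).mono_left nhdsWithin_le_nhds
  exact leftLim_eq_of_tendsto (hT.congr' heq)

theorem mixCDF_eq_half (hp0 : 0 ≤ p) (hp1 : p < 1) (hFc : StrictMono Fc)
    (hlt : p / (1 - p) < |1 - 2 * Fc 0|) {β : ℝ}
    (hβ : Fc β = (1 - Real.sign (1 - 2 * Fc 0) * (p / (1 - p))) / 2) :
    mixCDF p Fc β = 1 / 2 := by
  have h1p : 0 < 1 - p := by linarith
  have hO : (1 - p) * (p / (1 - p)) = p := mul_div_cancel₀ _ h1p.ne'
  rcases lt_trichotomy (1 - 2 * Fc 0) 0 with hd | hd | hd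
  · rw [Real.sign_of_neg hd] at hβ
    rw [abs_of_neg hd] at hlt
    have hβneg : β < 0 := hFc.lt_iff_lt.mp (by linarith)
    simp only [mixCDF, if_neg hβneg.not_ge, hβ]
    linear_combination hO / 2
  · rw [hd, abs_zero] at hlt
    exact absurd hlt (div_nonneg hp0 h1p.le).not_gt
  · rw [Real.sign_of_pos hd] at hβ
    rw [abs_of_pos hd] at hlt
    have hβpos : 0 < β := hFc.lt_iff_lt.mp (by linarith)
    simp only [mixCDF, if_pos hβpos.le, hβ]
    linear_combination -hO / 2

theorem isMedian_mixCDF_zero (hp1 : p < 1) (hFc : Continuous Fc)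
    (hle : |1 - 2 * Fc 0| ≤ p / (1 - p)) : IsMedian (mixCDF p Fc) 0 := by
  have h1p : 0 < 1 - p := by linarith
  have hjump : |(1 - p) * (1 - 2 * Fc 0)| ≤ p := by
    rw [abs_mul, abs_of_pos h1p]
    exact (mul_le_mul_of_nonneg_left hle h1p.le).trans_eq (mul_div_cancel₀ p h1p.ne')
  obtain ⟨hlow, hhigh⟩ := abs_le.mp hjump
  refine ⟨?_, ?_⟩
  · simp only [mixCDF, if_pos le_rfl]
    linarith
  · rw [leftLim_mixCDF_zero hFc]
    linarith

end MixCDF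

theorem lemma_one_general (p : ℝ) (hp0 : 0 ≤ p) (hp1 : p < 1)
    (Fc : ℝ → ℝ) (hFc_cont : Continuous Fc) (hFc_mono : StrictMono Fc)
    (medc : ℝ) (hmedc : Fc medc = 1 / 2) :
    (p / (1 - p) < |1 - 2 * Fc 0| →
      ∀ βs : ℝ, Fc βs = (1 - Real.sign medc * (p / (1 - p))) / 2 →
        IsMedian (mixCDF p Fc) βs ∧
        ∀ M : ℝ, IsMedian (mixCDF p Fc) M → M = βs) ∧
    (|1 - 2 * Fc 0| ≤ p / (1 - p) → IsMedian (mixCDF p Fc) 0) := by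
  have hF : StrictMono (mixCDF p Fc) := mixCDF_strictMono hp0 hp1 hFc_mono
  refine ⟨fun hlt βs hβs => ?_, isMedian_mixCDF_zero hp1 hFc_cont⟩
  rw [Real.sign_eq_sign_one_sub_two_mul hFc_mono hmedc] at hβs
  have hhalf := mixCDF_eq_half hp0 hp1 hFc_mono hlt hβs
  exact ⟨IsMedian.of_eq_half hF.monotone hhalf, fun M hM => hM.eq_of_strictMono hF hhalf⟩

theorem lemma_one (p : ℝ) (hp0 : 0 ≤ p) (hp1 : p < 1)
    (Fc : ℝ → ℝ) (hFc_cont : Continuous Fc) (hFc_mono : StrictMono Fc)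
    (hFc_bot : Tendsto Fc atBot (𝓝 0)) (hFc_top : Tendsto Fc atTop (𝓝 1))
    (medc : ℝ) (hmedc : Fc medc = 1 / 2) :
    (p / (1 - p) < |1 - 2 * Fc 0| →
      ∀ βs : ℝ, Fc βs = (1 - Real.sign medc * (p / (1 - p))) / 2 →
        IsMedian (mixCDF p Fc) βs ∧
        ∀ M : ℝ, IsMedian (mixCDF p Fc) M → M = βs) ∧
    (|1 - 2 * Fc 0| ≤ p / (1 - p) → IsMedian (mixCDF p Fc) 0) :=
  lemma_one_general p hp0 hp1 Fc hFc_cont hFc_mono medc hmedc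
end

section
/- (Shrinkage property) If π > 0 and Med_c ≠ 0, then every median M of the mixture CDF F satisfies |M| < |Med_c|; that is, the median of the mixture is strictly closer to zero than the median of the continuous component. -/
open Filter Topology Function

/-!
The atom of mass `π` at `0` lifts `F` by `π` on `[0, ∞)` and scales it by `1 - π` on
`(-∞, 0)`. So a negative median `M` forces `(1 - π) F_c(M) ≥ 1/2`, hence `F_c(M) > 1/2`,
and a positive one forces `π + (1 - π) F_c(M) ≤ 1/2` (the left limit at `M > 0` sees the atom
because `F_c` is continuous), hence `F_c(M) < 1/2`. As `F_c` is strictly increasing and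
`F_c(Med_c) = 1/2`, `M` lies strictly between `Med_c` and `0` unless `M = 0`.
-/

section

variable {p : ℝ} {Fc : ℝ → ℝ} {M : ℝ}

lemma mixCDF_of_neg (hM : M < 0) : mixCDF p Fc M = (1 - p) * Fc M := by
  simp [mixCDF, hM.not_ge]

lemma mixCDF_of_nonneg (hM : 0 ≤ M) : mixCDF p Fc M = p + (1 - p) * Fc M := by
  simp [mixCDF, hM]

lemma leftLim_mixCDF_of_pos (hFc : ContinuousAt Fc M) (hM : 0 < M) :
    leftLim (mixCDF p Fc) M = p + (1 - p) * Fc M :=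
  leftLim_eq_of_tendsto <|
    (((hFc.const_mul (1 - p)).const_add p).tendsto.mono_left nhdsWithin_le_nhds).congr' <|
      (eventually_nhdsWithin_of_eventually_nhds (lt_mem_nhds hM)).mono
        fun _ hx => (mixCDF_of_nonneg hx.le).symm

lemma IsMedian.half_lt_of_neg (hp : 0 < p) (hp1 : p ≤ 1) (hMed : IsMedian (mixCDF p Fc) M)
    (hM : M < 0) : 1 / 2 < Fc M := by
  have h := hMed.1
  rw [mixCDF_of_neg hM] at h
  nlinarith

lemma IsMedian.lt_half_of_pos (hp : 0 < p) (hp1 : p ≤ 1) (hFc : ContinuousAt Fc M)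
    (hMed : IsMedian (mixCDF p Fc) M) (hM : 0 < M) : Fc M < 1 / 2 := by
  have h := hMed.2
  rw [leftLim_mixCDF_of_pos hFc hM] at h
  nlinarith

end

theorem median_shrinks_toward_zero_general (p : ℝ) (hp1 : p < 1)
    (Fc : ℝ → ℝ) (hFc_cont : Continuous Fc) (hFc_mono : StrictMono Fc)
    (medc : ℝ) (hmedc : Fc medc = 1 / 2)
    (hp_pos : 0 < p) (hmedc_ne : medc ≠ 0) :
    ∀ M : ℝ, IsMedian (mixCDF p Fc) M → |M| < |medc| := by
  intro M hM
  rcases lt_trichotomy M 0 with hneg | rfl | hpos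
  · have hlt : medc < M :=
      hFc_mono.lt_iff_lt.mp (hmedc ▸ hM.half_lt_of_neg hp_pos hp1.le hneg)
    rw [abs_of_neg hneg, abs_of_neg (hlt.trans hneg)]
    linarith
  · simpa using hmedc_ne
  · have hlt : M < medc :=
      hFc_mono.lt_iff_lt.mp (hmedc ▸ hM.lt_half_of_pos hp_pos hp1.le hFc_cont.continuousAt hpos)
    rw [abs_of_pos hpos, abs_of_pos (hpos.trans hlt)]
    exact hlt

theorem median_shrinks_toward_zero (p : ℝ) (hp0 : 0 ≤ p) (hp1 : p < 1)
    (Fc : ℝ → ℝ) (hFc_cont : Continuous Fc) (hFc_mono : StrictMono Fc)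
    (hFc_bot : Tendsto Fc atBot (𝓝 0)) (hFc_top : Tendsto Fc atTop (𝓝 1))
    (medc : ℝ) (hmedc : Fc medc = 1 / 2)
    (hp_pos : 0 < p) (hmedc_ne : medc ≠ 0) :
    ∀ M : ℝ, IsMedian (mixCDF p Fc) M → |M| < |medc| :=
  median_shrinks_toward_zero_general p hp1 Fc hFc_cont hFc_mono medc hmedc hp_pos hmedc_ne
end
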